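/- arXiv:math/0312020 — 4 statements merged into one kernel-verified Lean document; each statement's English description precedes it below -/
import Mathlib

section
/- Fix r ≥ 1. A tuple (l, m, n, k, a≪, a≫) is a basic square configuration if and only if (rev(k), rev(n), rev(m), rev(l), a≫, a≪) is a basic square configuration, where rev(s)_i = s_{−1−i}. -/
open scoped Classical

/-- A doubly infinite bit sequence: a function `ℤ → ℕ` with all values `≤ 1`. -/
def IsBitSeq (s : ℤ → ℕ) : Prop := ∀ i, s i ≤ 1

/-- The quadruple `(w (i-r), t (i-r), s i, w i)` equals `(1,0,0,1)`:
the strip `t/s` with witness `w` has an `r`-ribbon at position `i`. -/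
def Quad (r : ℕ) (s t w : ℤ → ℕ) (i : ℤ) : Prop :=
  w (i - r) = 1 ∧ t (i - r) = 0 ∧ s i = 0 ∧ w i = 1

/-- `w` is a witness for `t/s` being a horizontal `r`-ribbon strip: for every `i`, the
quadruple `(w (i-r), t (i-r), s i, w i)` is of the form `(a,a,b,b)` or equals `(1,0,0,1)`,
the latter happening only finitely often. -/
def IsWitness (r : ℕ) (s t w : ℤ → ℕ) : Prop :=
  (∀ i : ℤ, (w (i - r) = t (i - r) ∧ s i = w i) ∨ Quad r s t w i) ∧
    {i : ℤ | Quad r s t w i}.Finite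

/-- `t/s` is a horizontal `r`-ribbon strip (`s ≤ʰᵣ t`). -/
def HStrip (r : ℕ) (s t : ℤ → ℕ) : Prop := ∃ w, IsWitness r s t w

/-- The height `∑_{j=1}^{r-1} w (i - j)` of a ribbon at position `i` read off from `w`. -/
def hgtAt (r : ℕ) (w : ℤ → ℕ) (i : ℤ) : ℕ := ∑ j ∈ Finset.Ico 1 r, w (i - (j : ℤ))

/-- The witness of a horizontal `r`-ribbon strip (it is unique). -/
noncomputable def theWitness (r : ℕ) (s t : ℤ → ℕ) : ℤ → ℕ :=
  if h : HStrip r s t then h.choose else s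

/-- The strip `t/s` has a ribbon at position (head diagonal) `i`. -/
def RibbonAt (r : ℕ) (s t : ℤ → ℕ) (i : ℤ) : Prop :=
  Quad r s t (theWitness r s t) i

/-- The number of `r`-ribbons of the strip `t/s`. -/
noncomputable def ribCount (r : ℕ) (s t : ℤ → ℕ) : ℕ :=
  {i : ℤ | RibbonAt r s t i}.ncard

/-- Twice the spin of the horizontal `r`-ribbon strip `t/s`: the total height of the
ribbons of its standardisation. -/
noncomputable def twoSpin (r : ℕ) (s t : ℤ → ℕ) : ℕ :=
  ∑ᶠ i ∈ {i : ℤ | RibbonAt r s t i}, hgtAt r (theWitness r s t) i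

/-- Basic square configuration `((l m // n k), aL, aG)` (Definition of the paper):
all five skew shapes are horizontal `r`-ribbon strips, and with `w` the witness for
`l ≤ʰᵣ k` there is a map `a : ℤ → ℕ → ℕ` satisfying conditions (0)–(4). -/
def IsBSC (r : ℕ) (l m n k : ℤ → ℕ) (aL aG : ℕ → ℕ) : Prop :=
  HStrip r l m ∧ HStrip r l n ∧ HStrip r m k ∧ HStrip r n k ∧ HStrip r l k ∧
  ∀ w, IsWitness r l k w →
    ∃ a : ℤ → ℕ → ℕ, ∀ i : ℤ,
      (¬ Quad r l k w i → a i = a (i + 1)) ∧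
      (w (i - r) ≠ w i → a i (hgtAt r w i) = 0) ∧
      (Quad r l k w i → RibbonAt r l m i → RibbonAt r l n i →
        a (i + 1) = fun h => a i h + (if h = hgtAt r w i then 1 else 0)) ∧
      (Quad r l k w i → RibbonAt r m k i → RibbonAt r n k i →
        a i = fun h => a (i + 1) h + (if h = hgtAt r w i then 1 else 0)) ∧
      (Quad r l k w i → ¬ (RibbonAt r l m i ∧ RibbonAt r l n i) →
        ¬ (RibbonAt r m k i ∧ RibbonAt r n k i) → a i = a (i + 1)) ∧
      ((∀ j : ℤ, j < i → ¬ Quad r l k w j) → a i = aL) ∧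
      ((∀ j : ℤ, i ≤ j → ¬ Quad r l k w j) → a i = aG)

/-- The reverse of a bit sequence. -/
def revSeq (s : ℤ → ℕ) : ℤ → ℕ := fun i => s (-1 - i)

lemma revSeq_revSeq (s : ℤ → ℕ) : revSeq (revSeq s) = s := by
  funext i
  show s (-1 - (-1 - i)) = s i
  congr 1
  ring

lemma quad_rev (r : ℕ) (s t w : ℤ → ℕ) (i : ℤ) :
    Quad r (revSeq t) (revSeq s) (revSeq w) i ↔ Quad r s t w ((r : ℤ) - 1 - i) := by
  unfold Quad revSeq
  rw [show (-1 : ℤ) - (i - (r : ℤ)) = (r : ℤ) - 1 - i by ring,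
      show (r : ℤ) - 1 - i - (r : ℤ) = -1 - i by ring]
  tauto

lemma isWitness_rev (r : ℕ) (s t w : ℤ → ℕ) (h : IsWitness r s t w) :
    IsWitness r (revSeq t) (revSeq s) (revSeq w) := by
  constructor
  · intro i
    rcases h.1 ((r : ℤ) - 1 - i) with ⟨ha, hb⟩ | hq
    · left
      unfold revSeq
      constructor
      · rw [show (-1 : ℤ) - (i - (r : ℤ)) = (r : ℤ) - 1 - i by ring]
        exact hb.symm
      · rw [show (r : ℤ) - 1 - i - (r : ℤ) = -1 - i by ring] at ha
        exact ha.symm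
    · right
      exact (quad_rev r s t w i).mpr hq
  · have hset : {i : ℤ | Quad r (revSeq t) (revSeq s) (revSeq w) i} =
        (fun i : ℤ => (r : ℤ) - 1 - i) ⁻¹' {i | Quad r s t w i} := by
      ext i
      simp only [Set.mem_setOf_eq, Set.mem_preimage]
      exact quad_rev r s t w i
    rw [hset]
    have hinj : Function.Injective (fun i : ℤ => (r : ℤ) - 1 - i) := by
      intro a b hab
      dsimp at hab
      omega
    exact Set.Finite.preimage hinj.injOn h.2

lemma hStrip_rev (r : ℕ) (s t : ℤ → ℕ) (h : HStrip r s t) :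
    HStrip r (revSeq t) (revSeq s) := by
  obtain ⟨w, hw⟩ := h
  exact ⟨revSeq w, isWitness_rev r s t w hw⟩

lemma witness_step (r : ℕ) (s t w w' : ℤ → ℕ)
    (hw : IsWitness r s t w) (hw' : IsWitness r s t w')
    (i : ℤ) (h1 : w i = 1) (h0 : w' i = 0) :
    w (i + r) = 1 ∧ w' (i + r) = 0 ∧ Quad r s t w (i + r) := by
  have e : i + (r : ℤ) - (r : ℤ) = i := by ring
  have ht : t i = 0 ∧ s (i + (r : ℤ)) = w' (i + (r : ℤ)) := by
    rcases hw'.1 (i + (r : ℤ)) with ⟨ha, hb⟩ | hq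
    · rw [e] at ha
      exact ⟨by omega, hb⟩
    · exfalso
      have := hq.1
      rw [e] at this
      omega
  have hq2 : Quad r s t w (i + (r : ℤ)) := by
    rcases hw.1 (i + (r : ℤ)) with ⟨ha, _⟩ | hq
    · exfalso
      rw [e] at ha
      omega
    · exact hq
  refine ⟨hq2.2.2.2, ?_, hq2⟩
  have := hq2.2.2.1
  omega

lemma witness_nodiff (r : ℕ) (hr : 1 ≤ r) (s t w w' : ℤ → ℕ)
    (hw : IsWitness r s t w) (hw' : IsWitness r s t w')
    (i0 : ℤ) (h1 : w i0 = 1) (h0 : w' i0 = 0) : False := by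
  have key : ∀ kk : ℕ, w (i0 + ((kk : ℤ) + 1) * r) = 1 ∧ w' (i0 + ((kk : ℤ) + 1) * r) = 0 ∧
      Quad r s t w (i0 + ((kk : ℤ) + 1) * r) := by
    intro kk
    induction kk with
    | zero =>
      have hs := witness_step r s t w w' hw hw' i0 h1 h0
      have e : i0 + (r : ℤ) = i0 + (((0 : ℕ) : ℤ) + 1) * r := by push_cast; ring
      rw [e] at hs
      exact hs
    | succ p ih =>
      have hs := witness_step r s t w w' hw hw' (i0 + ((p : ℤ) + 1) * r) ih.1 ih.2.1
      have e : i0 + ((p : ℤ) + 1) * r + r = i0 + (((p + 1 : ℕ) : ℤ) + 1) * r := by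
        push_cast; ring
      rw [e] at hs
      exact hs
  have hinj : Function.Injective (fun kk : ℕ => i0 + ((kk : ℤ) + 1) * r) := by
    intro a b hab
    dsimp at hab
    have hr0 : (r : ℤ) ≠ 0 := by
      have : r ≠ 0 := by omega
      exact_mod_cast this
    have h2 : ((a : ℤ) + 1) * r = ((b : ℤ) + 1) * r := by linarith
    have h3 := mul_right_cancel₀ hr0 h2
    have : (a : ℤ) = b := by linarith
    exact_mod_cast this
  have hmem : ∀ kk : ℕ, (fun kk : ℕ => i0 + ((kk : ℤ) + 1) * r) kk ∈
      {i : ℤ | Quad r s t w i} := fun kk => (key kk).2.2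
  exact (Set.not_infinite.mpr hw.2) (Set.infinite_of_injective_forall_mem hinj hmem)

lemma witness_unique (r : ℕ) (hr : 1 ≤ r) (s t w w' : ℤ → ℕ)
    (hw : IsWitness r s t w) (hw' : IsWitness r s t w') : w = w' := by
  funext i
  by_contra hne
  have hv : ∀ u : ℤ → ℕ, IsWitness r s t u → u i = s i ∨ (s i = 0 ∧ u i = 1) := by
    intro u hu
    rcases hu.1 i with ⟨_, hb⟩ | hq
    · exact Or.inl hb.symm
    · exact Or.inr ⟨hq.2.2.1, hq.2.2.2⟩
  rcases hv w hw with h1 | h1 <;> rcases hv w' hw' with h2 | h2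
  · exact hne (h1.trans h2.symm)
  · exact witness_nodiff r hr s t w' w hw' hw i h2.2 (by omega)
  · exact witness_nodiff r hr s t w w' hw hw' i h1.2 (by omega)
  · exact hne (by omega)

lemma theWitness_spec (r : ℕ) (s t : ℤ → ℕ) (h : HStrip r s t) :
    IsWitness r s t (theWitness r s t) := by
  unfold theWitness
  rw [dif_pos h]
  exact h.choose_spec

lemma theWitness_eq (r : ℕ) (hr : 1 ≤ r) (s t w : ℤ → ℕ) (h : IsWitness r s t w) :
    theWitness r s t = w :=
  witness_unique r hr s t _ w (theWitness_spec r s t ⟨w, h⟩) h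

lemma ribbonAt_rev (r : ℕ) (hr : 1 ≤ r) (s t : ℤ → ℕ) (i : ℤ) :
    RibbonAt r (revSeq t) (revSeq s) i ↔ RibbonAt r s t ((r : ℤ) - 1 - i) := by
  by_cases h : HStrip r s t
  · have hw := theWitness_spec r s t h
    have hwit : theWitness r (revSeq t) (revSeq s) = revSeq (theWitness r s t) :=
      theWitness_eq r hr (revSeq t) (revSeq s) _ (isWitness_rev r s t _ hw)
    unfold RibbonAt
    rw [hwit]
    exact quad_rev r s t (theWitness r s t) i
  · have h' : ¬ HStrip r (revSeq t) (revSeq s) := by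
      intro h''
      apply h
      have := hStrip_rev r (revSeq t) (revSeq s) h''
      rwa [revSeq_revSeq, revSeq_revSeq] at this
    unfold RibbonAt theWitness
    rw [dif_neg h, dif_neg h']
    unfold Quad revSeq
    constructor
    · rintro ⟨_, _, h3, h4⟩
      omega
    · rintro ⟨_, _, h3, h4⟩
      omega

lemma hgtAt_rev (r : ℕ) (w : ℤ → ℕ) (i : ℤ) :
    hgtAt r (revSeq w) i = hgtAt r w ((r : ℤ) - 1 - i) := by
  unfold hgtAt revSeq
  refine Finset.sum_nbij' (fun j => r - j) (fun j => r - j) ?_ ?_ ?_ ?_ ?_ <;>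
    intro a ha <;> simp only [Finset.mem_Ico] at *
  · omega
  · omega
  · omega
  · omega
  · congr 1
    have : ((r - a : ℕ) : ℤ) = (r : ℤ) - a := by
      have : a ≤ r := by omega
      push_cast [this]; ring
    rw [this]
    ring

lemma isBSC_rev (r : ℕ) (hr : 1 ≤ r) (l m n k : ℤ → ℕ) (aL aG : ℕ → ℕ)
    (H : IsBSC r l m n k aL aG) :
    IsBSC r (revSeq k) (revSeq n) (revSeq m) (revSeq l) aG aL := by
  obtain ⟨hlm, hln, hmk, hnk, hlk, ha⟩ := H
  refine ⟨hStrip_rev r n k hnk, hStrip_rev r m k hmk, hStrip_rev r l n hln,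
    hStrip_rev r l m hlm, hStrip_rev r l k hlk, ?_⟩
  intro w' hw'
  have hw : IsWitness r l k (theWitness r l k) := theWitness_spec r l k hlk
  have hwe : w' = revSeq (theWitness r l k) :=
    witness_unique r hr (revSeq k) (revSeq l) w' _ hw' (isWitness_rev r l k _ hw)
  subst hwe
  obtain ⟨a, haa⟩ := ha (theWitness r l k) hw
  refine ⟨fun i => a ((r : ℤ) - i), fun i => ?_⟩
  have e1 : (r : ℤ) - i = (r : ℤ) - 1 - i + 1 := by ring
  have e2 : (r : ℤ) - (i + 1) = (r : ℤ) - 1 - i := by ring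
  have hq : ∀ p : ℤ, Quad r (revSeq k) (revSeq l) (revSeq (theWitness r l k)) p ↔
      Quad r l k (theWitness r l k) ((r : ℤ) - 1 - p) :=
    fun p => quad_rev r l k (theWitness r l k) p
  have hrib : ∀ (s t : ℤ → ℕ) (p : ℤ), RibbonAt r (revSeq t) (revSeq s) p ↔
      RibbonAt r s t ((r : ℤ) - 1 - p) := fun s t p => ribbonAt_rev r hr s t p
  have hwv1 : revSeq (theWitness r l k) (i - (r : ℤ)) =
      theWitness r l k ((r : ℤ) - 1 - i) := by
    show theWitness r l k (-1 - (i - (r : ℤ))) = _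
    congr 1
    ring
  have hwv2 : revSeq (theWitness r l k) i =
      theWitness r l k ((r : ℤ) - 1 - i - (r : ℤ)) := by
    show theWitness r l k (-1 - i) = _
    congr 1
    ring
  have hh : hgtAt r (revSeq (theWitness r l k)) i =
      hgtAt r (theWitness r l k) ((r : ℤ) - 1 - i) := hgtAt_rev r (theWitness r l k) i
  obtain ⟨c1, c2, c3, c4, c5, c6, c7⟩ := haa ((r : ℤ) - 1 - i)
  obtain ⟨d1, d2, d3, d4, d5, d6, d7⟩ := haa ((r : ℤ) - 1 - i + 1)
  simp only [hq, hrib, hwv1, hwv2, hh, e1, e2]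
  refine ⟨?_, ?_, ?_, ?_, ?_, ?_, ?_⟩
  · intro hnq
    exact (c1 hnq).symm
  · intro hne
    have hnq : ¬ Quad r l k (theWitness r l k) ((r : ℤ) - 1 - i) := by
      intro hQ
      exact hne (hQ.2.2.2.trans hQ.1.symm)
    rw [← c1 hnq]
    exact c2 hne.symm
  · intro hQ hA hB
    exact c4 hQ hB hA
  · intro hQ hA hB
    exact c3 hQ hB hA
  · intro hQ hA hB
    exact (c5 hQ (fun hc => hB ⟨hc.2, hc.1⟩) (fun hc => hA ⟨hc.2, hc.1⟩)).symm
  · intro h6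
    apply d7
    intro p hp
    have := h6 ((r : ℤ) - 1 - p) (by omega)
    rwa [show (r : ℤ) - 1 - ((r : ℤ) - 1 - p) = p by ring] at this
  · intro h7
    apply d6
    intro p hp
    have := h7 ((r : ℤ) - 1 - p) (by omega)
    rwa [show (r : ℤ) - 1 - ((r : ℤ) - 1 - p) = p by ring] at this

/-- `((l m // n k), a≪, a≫)` is a basic square configuration if and only if
`((k̄ n̄ // m̄ l̄), a≫, a≪)` is one, where `s̄` denotes the reversed sequence. -/
theorem stmt12 (r : ℕ) (hr : 1 ≤ r) (l m n k : ℤ → ℕ)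
    (hl : IsBitSeq l) (hm : IsBitSeq m) (hn : IsBitSeq n) (hk : IsBitSeq k)
    (aL aG : ℕ → ℕ) :
    IsBSC r l m n k aL aG ↔ IsBSC r (revSeq k) (revSeq n) (revSeq m) (revSeq l) aG aL := by
  constructor
  · exact isBSC_rev r hr l m n k aL aG
  · intro H
    have := isBSC_rev r hr (revSeq k) (revSeq n) (revSeq m) (revSeq l) aG aL H
    simpa only [revSeq_revSeq] using this
end

section
/- For partitions λ, μ, ν: the conditions λ ≤ʰ μ (μ/λ a horizontal strip) and λ ≤ᵛ ν (ν/λ a vertical strip) are characterized by the diagonal-crossing sequences, namely λ ≤ʰ μ iff E(μ)_{k+1} − 1 ≤ E(λ)_k ≤ E(μ)_k ≤ E(λ)_{k+1} + 1 for all k, and λ ≤ᵛ ν iff E(ν)_{k+1} ≤ E(λ)_k ≤ E(ν)_k ≤ E(λ)_{k−1} for all k ∈ ℤ, where E(λ)_k = Σ_{i ≥ k} edge(λ)_i. -/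
open scoped Classical

/-- A partition: a weakly decreasing, eventually zero function `ℕ → ℕ`. -/
def IsPartition (f : ℕ → ℕ) : Prop :=
  (∀ i j : ℕ, i ≤ j → f j ≤ f i) ∧ ∃ N : ℕ, ∀ n : ℕ, N ≤ n → f n = 0

/-- The edge sequence of a partition: bit `1` exactly at the positions `f j - j - 1`
(for `j : ℕ`); it is eventually `1` to the left and `0` to the right, and adding a
square on diagonal `k` replaces the substring `10` at positions `(k-1, k)` by `01`. -/
noncomputable def edgeSeq (f : ℕ → ℕ) (k : ℤ) : ℕ :=
  if ∃ j : ℕ, (f j : ℤ) - (j : ℤ) - 1 = k then 1 else 0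

/-- `E(λ)_k = Σ_{i ≥ k} edge(λ)_i`: the vertical coordinate of the point where the
boundary of `λ` crosses the diagonal `d_k`. -/
noncomputable def Ecross (f : ℕ → ℕ) (k : ℤ) : ℕ := ∑ᶠ i ∈ Set.Ici k, edgeSeq f i

lemma lt_Ecross_iff (f : ℕ → ℕ) (hf : IsPartition f) (k : ℤ) (j : ℕ) :
    j < Ecross f k ↔ (k + j + 1 : ℤ) ≤ f j := by
  set P : ℕ → Prop := fun m => (f m : ℤ) < k + m + 1 with hP
  have hPmono : ∀ a b : ℕ, a ≤ b → P a → P b := by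
    intro a b hab ha
    have := hf.1 a b hab
    simp only [hP] at ha ⊢
    have : (f b : ℤ) ≤ f a := by exact_mod_cast this
    omega
  have hex : ∃ m, P m := by
    obtain ⟨N, hN⟩ := hf.2
    refine ⟨N + k.natAbs, ?_⟩
    have h0 : f (N + k.natAbs) = 0 := hN _ (Nat.le_add_right _ _)
    show (f (N + k.natAbs) : ℤ) < k + (N + k.natAbs : ℕ) + 1
    rw [h0]
    push_cast
    have h1 : -|k| ≤ k := neg_abs_le k
    omega
  set m := Nat.find hex with hm
  have hchar : ∀ j : ℕ, j < m ↔ ¬ P j := by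
    intro j
    constructor
    · intro hj; exact Nat.find_min hex hj
    · intro hj
      by_contra hle
      exact hj (hPmono m j (by omega) (Nat.find_spec hex))
  have hE : Ecross f k = m := by
    have hsa : StrictAnti (fun j : ℕ => (f j : ℤ) - j - 1) := by
      apply strictAnti_nat_of_succ_lt
      intro n
      have := hf.1 n (n+1) (by omega)
      have : (f (n+1) : ℤ) ≤ f n := by exact_mod_cast this
      push_cast; omega
    set T : Finset ℤ := (Finset.range m).image (fun j => (f j : ℤ) - j - 1) with hT
    have hTcard : T.card = m := by
      rw [hT, Finset.card_image_of_injective _ hsa.injective, Finset.card_range]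
    have hmemT : ∀ i : ℤ, i ∈ T ↔ ∃ j < m, (f j : ℤ) - j - 1 = i := by
      intro i
      simp only [hT, Finset.mem_image, Finset.mem_range]
    have hsup : Set.Ici k ∩ Function.support (edgeSeq f) = ↑T := by
      ext i
      simp only [Set.mem_inter_iff, Set.mem_Ici, Function.mem_support, Finset.coe_sort_coe,
        Finset.mem_coe, hmemT]
      constructor
      · rintro ⟨hki, hsupp⟩
        have : ∃ j : ℕ, (f j : ℤ) - j - 1 = i := by
          by_contra hc; simp [edgeSeq, hc] at hsupp
        obtain ⟨j, hj⟩ := this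
        refine ⟨j, ?_, hj⟩
        rw [hchar]
        simp only [hP]
        omega
      · rintro ⟨j, hj, rfl⟩
        rw [hchar] at hj
        simp only [hP] at hj
        constructor
        · omega
        · simp only [edgeSeq]
          rw [if_pos ⟨j, rfl⟩]
          omega
    have : Ecross f k = ∑ i ∈ T, edgeSeq f i := by
      rw [Ecross]
      apply finsum_mem_eq_sum_of_inter_support_eq
      rw [hsup]
      ext i
      simp only [Set.mem_inter_iff, Finset.mem_coe, Function.mem_support, Finset.coe_sort_coe]
      constructor
      · intro hi; exact ⟨hi, by
          rw [hmemT] at hi; obtain ⟨j, hj, rfl⟩ := hi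
          simp only [edgeSeq]; rw [if_pos ⟨j, rfl⟩]; omega⟩
      · rintro ⟨hi, _⟩; exact hi
    rw [this]
    calc ∑ i ∈ T, edgeSeq f i = ∑ i ∈ T, 1 := by
          apply Finset.sum_congr rfl
          intro i hi
          rw [hmemT] at hi; obtain ⟨j, hj, rfl⟩ := hi
          simp only [edgeSeq]; rw [if_pos ⟨j, rfl⟩]
      _ = T.card := by simp
      _ = m := hTcard
  rw [hE, hchar j]
  simp only [hP]
  omega

/-- Characterisation of horizontal and vertical strips by the diagonal-crossing
sequences: `λ ≤ʰ μ` iff `E(μ)_{k+1} - 1 ≤ E(λ)_k ≤ E(μ)_k ≤ E(λ)_{k+1} + 1` for all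
`k`, and `λ ≤ᵛ ν` iff `E(ν)_{k+1} ≤ E(λ)_k ≤ E(ν)_k ≤ E(λ)_{k-1}` for all `k`. -/
theorem stmt16 (f g h : ℕ → ℕ)
    (hf : IsPartition f) (hg : IsPartition g) (hh : IsPartition h) :
    ((∀ i, f i ≤ g i ∧ g (i + 1) ≤ f i) ↔
      ∀ k : ℤ, Ecross g (k + 1) ≤ Ecross f k + 1 ∧ Ecross f k ≤ Ecross g k ∧
        Ecross g k ≤ Ecross f (k + 1) + 1) ∧
    ((∀ i, f i ≤ h i ∧ h i ≤ f i + 1) ↔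
      ∀ k : ℤ, Ecross h (k + 1) ≤ Ecross f k ∧ Ecross f k ≤ Ecross h k ∧
        Ecross h k ≤ Ecross f (k - 1)) := by
  have Lf := lt_Ecross_iff f hf
  have Lg := lt_Ecross_iff g hg
  have Lh := lt_Ecross_iff h hh
  constructor
  · constructor
    · intro H k
      refine ⟨?_, ?_, ?_⟩
      · apply le_of_forall_lt
        intro j hj
        rw [Lg] at hj
        match j with
        | 0 => omega
        | (i+1) =>
          have h1 := (H i).2
          have h2 : i < Ecross f k := by rw [Lf]; push_cast at hj ⊢; omega
          omega
      · apply le_of_forall_lt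
        intro j hj
        rw [Lf] at hj
        rw [Lg]
        have := (H j).1
        omega
      · apply le_of_forall_lt
        intro j hj
        rw [Lg] at hj
        match j with
        | 0 => omega
        | (i+1) =>
          have h1 := (H i).2
          have h2 : i < Ecross f (k+1) := by rw [Lf]; push_cast at hj ⊢; omega
          omega
    · intro R i
      constructor
      · have h1 := (R ((f i : ℤ) - i - 1)).2.1
        have h2 : i < Ecross f ((f i : ℤ) - i - 1) := by rw [Lf]; omega
        have h3 : i < Ecross g ((f i : ℤ) - i - 1) := lt_of_lt_of_le h2 h1
        rw [Lg] at h3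
        omega
      · have h1 := (R ((g (i+1) : ℤ) - i - 2)).2.2
        have h2 : i + 1 < Ecross g ((g (i+1) : ℤ) - i - 2) := by
          rw [Lg]; push_cast; omega
        have h3 : i < Ecross f (((g (i+1) : ℤ) - i - 2) + 1) := by omega
        rw [Lf] at h3
        omega
  · constructor
    · intro V k
      refine ⟨?_, ?_, ?_⟩
      · apply le_of_forall_lt
        intro j hj
        rw [Lh] at hj
        rw [Lf]
        have := (V j).2
        omega
      · apply le_of_forall_lt
        intro j hj
        rw [Lf] at hj
        rw [Lh]
        have := (V j).1
        omega
      · apply le_of_forall_lt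
        intro j hj
        rw [Lh] at hj
        rw [Lf]
        have := (V j).2
        omega
    · intro R i
      constructor
      · have h1 := (R ((f i : ℤ) - i - 1)).2.1
        have h2 : i < Ecross f ((f i : ℤ) - i - 1) := by rw [Lf]; omega
        have h3 : i < Ecross h ((f i : ℤ) - i - 1) := lt_of_lt_of_le h2 h1
        rw [Lh] at h3
        omega
      · have h1 := (R ((h i : ℤ) - i - 1)).2.2
        have h2 : i < Ecross h ((h i : ℤ) - i - 1) := by rw [Lh]; omega
        have h3 : i < Ecross f (((h i : ℤ) - i - 1) - 1) := lt_of_lt_of_le h2 h1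
        rw [Lf] at h3
        omega
end

section
/- Fix r ≥ 1 and partitions λ, μ, ν, κ with μ/λ a horizontal r-ribbon strip, ν/λ a vertical r-ribbon strip, κ/μ a vertical r-ribbon strip, and κ/ν a horizontal r-ribbon strip. Let S ⊂ ℤ be the set of diagonals containing heads of ribbons in both standardisations of μ/λ and ν/λ, and T ⊂ ℤ the set of diagonals containing heads of ribbons in both standardisations of κ/μ and κ/ν. Then spinᵛ(κ/μ) + spin(κ/ν) − spin(μ/λ) − spinᵛ(ν/λ) = Σ_{k∈T} Δʳ(μ,ν)_{k+1} − Σ_{k∈S} Δʳ(μ,ν)_k, where Δʳ(μ,ν)_k = E(μ)_{k−r} − E(ν)_k with E(λ)_k = Σ_{i≥k} edge(λ)_i. -/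
open scoped Classical

/-- Transposition on edge sequences: reverse and complement
(`edge(λᵀ) = revc (edge λ)`). -/
def revc (s : ℤ → ℕ) : ℤ → ℕ := fun i => 1 - s (-1 - i)

/-- `t/s` is a vertical `r`-ribbon strip: its transpose is a horizontal one. -/
def VStrip (r : ℕ) (s t : ℤ → ℕ) : Prop := HStrip r (revc s) (revc t)

/-- The vertical `r`-ribbon strip `t/s` has, in its standardisation (ribbons added by
decreasing head diagonal), a ribbon with head on diagonal `k`. -/
def VRibbonAt (r : ℕ) (s t : ℤ → ℕ) (k : ℤ) : Prop :=
  RibbonAt r (revc s) (revc t) ((r : ℤ) - 1 - k)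

/-- Twice the spin of a vertical `r`-ribbon strip: the sum of the heights (in the
original, untransposed orientation) of the ribbons of its standardisation. -/
noncomputable def twoSpinV (r : ℕ) (s t : ℤ → ℕ) : ℕ :=
  ∑ᶠ q ∈ {q : ℤ | RibbonAt r (revc s) (revc t) q},
    (r - 1 - hgtAt r (theWitness r (revc s) (revc t)) q)

/-- `Δʳ(μ,ν)_k = E(μ)_{k-r} - E(ν)_k`. -/
noncomputable def Delta (r : ℕ) (mu nu : ℕ → ℕ) (k : ℤ) : ℚ :=
  (Ecross mu (k - r) : ℚ) - (Ecross nu k : ℚ)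


/-!
For a horizontal or a vertical `r`-ribbon strip `t/s` with heads on the diagonals `R`, the edge
sequences satisfy `t - s = 1_R - 1_R(· + r)`. For the four strips of the square `λ ⊆ μ, ν ⊆ κ`
this makes `1_A + 1_C - 1_B - 1_D` both `r`-periodic and finitely supported (`A, B, C, D` the
heads of `κ/μ, κ/ν, μ/λ, ν/λ`), so `1_A + 1_C = 1_B + 1_D`.

Twice a spin is a value of the bilinear form `⟨x, y⟩ = ∑_k x_k (y_{k-1} + ⋯ + y_{k-r+1})`:
at `(1_R, s + 1_R)` for a horizontal strip and at `(1_R, s - 1_R(· + r))` for a vertical one.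
Shifting the second argument by `r` transposes the form, and with this rule the left-hand side
expands to `⟨1_A - 1_D, g⟩` with `g = ν + 1_C - 1_D`. On the other side `Δʳ(μ,ν)_k` is the sum
of `g` over `[k - r, k)`, and `g` vanishes at `k` for `k ∈ T` and at `k - r` for `k ∈ S`, so the
right-hand side is `⟨1_T - 1_S, g⟩`; finally `1_T - 1_S = 1_A - 1_D`.
-/

lemma sum_Ico_one_reflect {M : Type*} [AddCommMonoid M] (r : ℕ) (f : ℤ → M) :
    ∑ j ∈ Finset.Ico 1 r, f ((r : ℤ) - j) = ∑ j ∈ Finset.Ico 1 r, f j := by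
  refine Finset.sum_nbij' (fun j => r - j) (fun j => r - j) ?_ ?_ ?_ ?_ ?_ <;> intro j hj <;>
    simp only [Finset.mem_Ico] at hj ⊢
  all_goals first | omega | (congr 1; omega)

lemma sum_Ico_eq_sum_Ico_one_sub {M : Type*} [AddCommMonoid M] (r : ℕ) (g : ℤ → M) (k : ℤ) :
    ∑ i ∈ Finset.Ico (k + 1 - r) k, g i = ∑ j ∈ Finset.Ico 1 r, g (k - j) := by
  refine (Finset.sum_nbij' (fun j : ℕ => k - j) (fun i => (k - i).toNat) ?_ ?_ ?_ ?_ ?_).symm <;>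
    intro j hj <;> simp only [Finset.mem_Ico] at hj ⊢
  all_goals omega

lemma sum_Ico_add_one_eq_of_eq_zero {M : Type*} [AddCommMonoid M] {r : ℕ} (hr : 1 ≤ r)
    {g : ℤ → M} {k : ℤ} (hg : g k = 0) :
    ∑ i ∈ Finset.Ico (k + 1 - r) (k + 1), g i = ∑ j ∈ Finset.Ico 1 r, g (k - j) := by
  rw [← Finset.sum_Ico_add_eq_sum_Ico_add_one (by omega), hg, add_zero,
    sum_Ico_eq_sum_Ico_one_sub]

lemma sum_Ico_sub_eq_of_eq_zero {M : Type*} [AddCommMonoid M] {r : ℕ} (hr : 1 ≤ r)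
    {g : ℤ → M} {k : ℤ} (hg : g (k - r) = 0) :
    ∑ i ∈ Finset.Ico (k - r) k, g i = ∑ j ∈ Finset.Ico 1 r, g (k - j) := by
  rw [← Finset.insert_Ico_add_one_left_eq_Ico (by omega), Finset.sum_insert (by simp), hg,
    zero_add, show k - r + 1 = k + 1 - r by ring, sum_Ico_eq_sum_Ico_one_sub]

lemma sum_Ico_add_sum_Ico {M : Type*} [AddCommMonoid M] (f : ℤ → M) {a b c : ℤ}
    (hab : a ≤ b) (hbc : b ≤ c) :
    ∑ i ∈ Finset.Ico a b, f i + ∑ i ∈ Finset.Ico b c, f i = ∑ i ∈ Finset.Ico a c, f i := by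
  rw [← Finset.sum_union (Finset.Ico_disjoint_Ico_consecutive a b c),
    Finset.Ico_union_Ico_eq_Ico hab hbc]

lemma Function.Periodic.eq_zero_of_finite_support {M : Type*} [Zero M] {f : ℤ → M} {c : ℤ}
    (hf : Function.Periodic f c) (hc : 0 < c) (hfin : (Function.support f).Finite) : f = 0 := by
  funext k
  obtain ⟨B, hB⟩ := hfin.bddAbove
  set n := (B - k).toNat + 1
  rw [Pi.zero_apply, ← hf.nat_mul n k]
  by_contra hne
  have hle : k + (n : ℤ) * c ≤ B := hB hne
  have hn : B - k < n := by omega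
  nlinarith

lemma indicator_inter_sub_indicator_inter {α : Type*} {A B C D : Set α}
    (h : A.indicator (1 : α → ℚ) + C.indicator 1 = B.indicator 1 + D.indicator 1) :
    (A ∩ B).indicator (1 : α → ℚ) - (C ∩ D).indicator 1 = A.indicator 1 - D.indicator 1 := by
  ext j
  have hj := congrFun h j
  simp only [Set.inter_indicator_one, Pi.mul_apply, Pi.add_apply, Pi.sub_apply,
    Set.indicator, Pi.one_apply] at hj ⊢
  split_ifs at hj ⊢ <;> linarith

noncomputable def windowPairing (r : ℕ) (U : Finset ℤ) : (ℤ → ℚ) →ₗ[ℚ] (ℤ → ℚ) →ₗ[ℚ] ℚ :=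
  LinearMap.mk₂ ℚ (fun x y => ∑ k ∈ U, x k * ∑ j ∈ Finset.Ico 1 r, y (k - j))
    (fun x x' y => by simp only [Pi.add_apply, add_mul, Finset.sum_add_distrib])
    (fun c x y => by simp only [Pi.smul_apply, smul_eq_mul, Finset.mul_sum, mul_assoc])
    (fun x y y' => by simp only [Pi.add_apply, Finset.sum_add_distrib, mul_add])
    (fun c x y => by simp only [Pi.smul_apply, smul_eq_mul, Finset.mul_sum, mul_left_comm])

lemma windowPairing_apply (r : ℕ) (U : Finset ℤ) (x y : ℤ → ℚ) :
    windowPairing r U x y = ∑ k ∈ U, x k * ∑ j ∈ Finset.Ico 1 r, y (k - j) := rfl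

/- Both sides are the sum of `x k * y m` over the pairs with `0 < m - k < r`. -/
lemma windowPairing_shift {r : ℕ} {U : Finset ℤ} {x y : ℤ → ℚ}
    (hx : Function.support x ⊆ U) (hy : Function.support y ⊆ U) :
    windowPairing r U x (fun i => y (i + r)) = windowPairing r U y x := by
  have htranslate (j : ℤ) : ∑ k ∈ U, x k * y (k + j) = ∑ k ∈ U, y k * x (k - j) := by
    rw [← finsum_eq_sum_of_support_subset _ ((Function.support_mul_subset_left _ _).trans hx),
      ← finsum_eq_sum_of_support_subset _ ((Function.support_mul_subset_left _ _).trans hy),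
      ← finsum_comp_equiv (Equiv.subRight j)]
    simp [mul_comm]
  have hreflect (k : ℤ) :
      ∑ j ∈ Finset.Ico 1 r, y (k - j + r) = ∑ j ∈ Finset.Ico 1 r, y (k + j) := by
    rw [← sum_Ico_one_reflect r (fun j => y (k + j))]
    exact Finset.sum_congr rfl fun j _ => by ring_nf
  simp only [windowPairing_apply, hreflect, Finset.mul_sum]
  rw [Finset.sum_comm, Finset.sum_comm (s := U)]
  exact Finset.sum_congr rfl fun j _ => htranslate j

lemma finsum_mem_eq_windowPairing {r : ℕ} {R : Set ℤ} {U : Finset ℤ} (hRU : R ⊆ U)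
    {F y : ℤ → ℚ} (hF : ∀ k ∈ R, F k = ∑ j ∈ Finset.Ico 1 r, y (k - j)) :
    ∑ᶠ k ∈ R, F k = windowPairing r U (R.indicator 1) y := by
  rw [finsum_mem_def,
    finsum_eq_sum_of_support_subset _ (Set.support_indicator_subset.trans hRU), windowPairing_apply]
  refine Finset.sum_congr rfl fun k _ => ?_
  by_cases hk : k ∈ R <;> simp [hk, hF]

lemma windowPairing_spin_identity {r : ℕ} {U : Finset ℤ} {a b c d x y l m n : ℤ → ℚ}
    (ha : Function.support a ⊆ U) (hc : Function.support c ⊆ U) (hd : Function.support d ⊆ U)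
    (habcd : a + c = b + d) (hxy : x - y = a - d)
    (hl : ∀ i, n i + d (i + r) = l i + d i) (hm : ∀ i, m i + c (i + r) = l i + c i) :
    (windowPairing r U a (fun i => m i - a (i + r)) + windowPairing r U b (fun i => n i + b i)) / 2
      - (windowPairing r U c (fun i => l i + c i)
        + windowPairing r U d (fun i => l i - d (i + r))) / 2
      = windowPairing r U x (fun i => n i + (c i - d i))
        - windowPairing r U y (fun i => n i + (c i - d i)) := by
  have hb : b = a + c - d := eq_sub_of_add_eq habcd.symm
  have hm' : (fun i => m i - a (i + r)) = n + c - d - (fun i => c (i + r))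
      + (fun i => d (i + r)) - (fun i => a (i + r)) := by
    ext i; simp only [Pi.add_apply, Pi.sub_apply]; linarith [hl i, hm i]
  have hl' : (fun i => l i + c i) = n - d + (fun i => d (i + r)) + c := by
    ext i; simp only [Pi.add_apply, Pi.sub_apply]; linarith [hl i]
  have hl'' : (fun i => l i - d (i + r)) = n - d := by
    ext i; simp only [Pi.sub_apply]; linarith [hl i]
  have hg : (fun i => n i + (c i - d i)) = n + c - d := by
    ext i; simp only [Pi.add_apply, Pi.sub_apply]; ring
  have hnb : (fun i => n i + b i) = n + b := rfl
  rw [← LinearMap.sub_apply, ← map_sub, hxy, hm', hl', hl'', hg, hnb, hb]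
  simp only [map_add, map_sub, LinearMap.add_apply, LinearMap.sub_apply]
  rw [windowPairing_shift ha hc, windowPairing_shift ha hd, windowPairing_shift ha ha,
    windowPairing_shift hc hd]
  ring

noncomputable def ribbonInd (r : ℕ) (s t : ℤ → ℕ) : ℤ → ℚ := {i | RibbonAt r s t i}.indicator 1

noncomputable def vRibbonInd (r : ℕ) (s t : ℤ → ℕ) : ℤ → ℚ := {k | VRibbonAt r s t k}.indicator 1

lemma ribbonInd_apply (r : ℕ) (s t : ℤ → ℕ) (i : ℤ) :
    ribbonInd r s t i = if RibbonAt r s t i then 1 else 0 := by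
  simp [ribbonInd, Set.indicator_apply]

lemma vRibbonInd_eq_ribbonInd_revc (r : ℕ) (s t : ℤ → ℕ) (k : ℤ) :
    vRibbonInd r s t k = ribbonInd r (revc s) (revc t) (r - 1 - k) := rfl

lemma vRibbonInd_of_vRibbonAt {r : ℕ} {s t : ℤ → ℕ} {k : ℤ} (hk : VRibbonAt r s t k) :
    vRibbonInd r s t k = 1 :=
  Set.indicator_of_mem hk 1

lemma support_ribbonInd_subset (r : ℕ) (s t : ℤ → ℕ) :
    Function.support (ribbonInd r s t) ⊆ {i | RibbonAt r s t i} :=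
  Set.support_indicator_subset

lemma support_vRibbonInd_subset (r : ℕ) (s t : ℤ → ℕ) :
    Function.support (vRibbonInd r s t) ⊆ {k | VRibbonAt r s t k} :=
  Set.support_indicator_subset

lemma isBitSeq_revc (s : ℤ → ℕ) : IsBitSeq (revc s) := fun _ => Nat.sub_le _ _

lemma revc_cast {s : ℤ → ℕ} (hs : IsBitSeq s) (i : ℤ) : (revc s i : ℚ) = 1 - s (-1 - i) := by
  rw [revc, Nat.cast_sub (hs _), Nat.cast_one]

namespace HStrip

variable {r : ℕ} {s t : ℤ → ℕ}

lemma isWitness_theWitness (h : HStrip r s t) : IsWitness r s t (theWitness r s t) := by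
  rw [theWitness, dif_pos h]
  exact h.choose_spec

lemma finite_ribbonAt (h : HStrip r s t) : {i | RibbonAt r s t i}.Finite :=
  h.isWitness_theWitness.2

lemma isBitSeq_theWitness (h : HStrip r s t) (hs : IsBitSeq s) : IsBitSeq (theWitness r s t) := by
  intro j
  rcases h.isWitness_theWitness.1 j with ⟨-, hj⟩ | hj
  · exact hj ▸ hs j
  · exact hj.2.2.2.le

lemma theWitness_eq (h : HStrip r s t) (j : ℤ) :
    (theWitness r s t j : ℚ) = s j + ribbonInd r s t j := by
  by_cases hj : RibbonAt r s t j
  · simp [ribbonInd_apply, hj, hj.2.2.1, hj.2.2.2]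
  · obtain ⟨-, hsj⟩ := (h.isWitness_theWitness.1 j).resolve_right hj
    simp [ribbonInd_apply, hj, hsj]

lemma theWitness_eq_shift (h : HStrip r s t) (j : ℤ) :
    (theWitness r s t j : ℚ) = t j + ribbonInd r s t (j + r) := by
  by_cases hj : RibbonAt r s t (j + r)
  · obtain ⟨hw, ht, -⟩ := id hj
    rw [add_sub_cancel_right] at hw ht
    simp [ribbonInd_apply, hj, hw, ht]
  · obtain ⟨hwt, -⟩ := (h.isWitness_theWitness.1 (j + r)).resolve_right hj
    rw [add_sub_cancel_right] at hwt
    simp [ribbonInd_apply, hj, hwt]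

lemma add_ribbonInd_shift (h : HStrip r s t) (j : ℤ) :
    (t j : ℚ) + ribbonInd r s t (j + r) = s j + ribbonInd r s t j := by
  rw [← h.theWitness_eq, ← h.theWitness_eq_shift]

lemma sub_add_ribbonInd_eq_one (h : HStrip r s t) {k : ℤ} (hk : RibbonAt r s t k) :
    (s (k - r) : ℚ) + ribbonInd r s t (k - r) = 1 := by
  rw [← h.theWitness_eq, hk.1, Nat.cast_one]

lemma twoSpin_eq (h : HStrip r s t) {U : Finset ℤ} (hU : {i | RibbonAt r s t i} ⊆ U) :
    (twoSpin r s t : ℚ) =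
      windowPairing r U (ribbonInd r s t) (fun i => s i + ribbonInd r s t i) := by
  rw [twoSpin, Nat.cast_finsum_mem h.finite_ribbonAt]
  exact finsum_mem_eq_windowPairing hU fun k _ => by simp [hgtAt, h.theWitness_eq]

end HStrip

namespace VStrip

variable {r : ℕ} {s t : ℤ → ℕ}

lemma finite_vRibbonAt (h : VStrip r s t) : {k | VRibbonAt r s t k}.Finite :=
  HStrip.finite_ribbonAt h |>.preimage sub_right_injective.injOn

lemma add_vRibbonInd_shift (h : VStrip r s t) (hs : IsBitSeq s) (ht : IsBitSeq t) (j : ℤ) :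
    (t j : ℚ) + vRibbonInd r s t (j + r) = s j + vRibbonInd r s t j := by
  have hj := HStrip.add_ribbonInd_shift h (-1 - j)
  rw [revc_cast ht, revc_cast hs, sub_sub_cancel] at hj
  rw [vRibbonInd_eq_ribbonInd_revc, vRibbonInd_eq_ribbonInd_revc,
    show (r : ℤ) - 1 - (j + r) = -1 - j by ring, show (r : ℤ) - 1 - j = -1 - j + r by ring]
  linarith

lemma sub_eq_one (hs : IsBitSeq s) {k : ℤ} (hk : VRibbonAt r s t k) : s (k - r) = 1 := by
  have hk := hk.2.2.1
  rw [revc, show -1 - ((r : ℤ) - 1 - k) = k - r by ring] at hk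
  have := hs (k - r)
  omega

lemma twoSpinV_eq (h : VStrip r s t) (hs : IsBitSeq s) {U : Finset ℤ}
    (hU : {k | VRibbonAt r s t k} ⊆ U) :
    (twoSpinV r s t : ℚ) =
      windowPairing r U (vRibbonInd r s t) (fun i => s i - vRibbonInd r s t (i + r)) := by
  set w := theWitness r (revc s) (revc t)
  have hw : IsBitSeq w := HStrip.isBitSeq_theWitness h (isBitSeq_revc s)
  have hcast (q : ℤ) :
      ((r - 1 - hgtAt r w q : ℕ) : ℚ) = ∑ j ∈ Finset.Ico 1 r, (1 - (w (q - j) : ℚ)) := by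
    have hle : hgtAt r w q ≤ r - 1 := by
      simpa [hgtAt] using Finset.sum_le_card_nsmul (Finset.Ico 1 r) _ 1 fun j _ => hw (q - j)
    rw [Nat.cast_sub hle, Finset.sum_sub_distrib]
    simp [hgtAt]
  have hbij : Set.BijOn (fun k : ℤ => (r : ℤ) - 1 - k) {k | VRibbonAt r s t k}
      {q | RibbonAt r (revc s) (revc t) q} :=
    ⟨fun k hk => hk, sub_right_injective.injOn,
      fun q hq => ⟨(r : ℤ) - 1 - q, by simpa [VRibbonAt] using hq, sub_sub_cancel _ _⟩⟩
  rw [twoSpinV, Nat.cast_finsum_mem (HStrip.finite_ribbonAt h),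
    ← finsum_mem_eq_of_bijOn _ hbij fun _ _ => rfl]
  refine finsum_mem_eq_windowPairing hU fun k _ => ?_
  rw [hcast, ← sum_Ico_one_reflect r fun j => (s (k - j) : ℚ) - vRibbonInd r s t (k - j + r)]
  refine Finset.sum_congr rfl fun j _ => ?_
  rw [HStrip.theWitness_eq h, revc_cast hs, vRibbonInd_eq_ribbonInd_revc,
    show -1 - ((r : ℤ) - 1 - k - j) = k - (r - j) by ring,
    show (r : ℤ) - 1 - (k - (r - j) + r) = r - 1 - k - j by ring]
  ring

end VStrip

lemma isBitSeq_edgeSeq (f : ℕ → ℕ) : IsBitSeq (edgeSeq f) := by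
  intro i
  rw [edgeSeq]
  split <;> omega

namespace IsPartition

variable {f : ℕ → ℕ}

lemma edgeSeq_eq_zero (hf : IsPartition f) {i : ℤ} (hi : (f 0 : ℤ) ≤ i) : edgeSeq f i = 0 := by
  rw [edgeSeq, if_neg]
  rintro ⟨j, hj⟩
  have := hf.1 0 j j.zero_le
  omega

lemma Ecross_eq_sum_Ico (hf : IsPartition f) {k M : ℤ} (hM : (f 0 : ℤ) ≤ M) :
    (Ecross f k : ℚ) = ∑ i ∈ Finset.Ico k M, (edgeSeq f i : ℚ) := by
  rw [Ecross, finsum_mem_eq_sum_of_inter_support_eq _ (t := Finset.Ico k M), Nat.cast_sum]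
  ext i
  simp only [Set.mem_inter_iff, Set.mem_Ici, Finset.coe_Ico, Set.mem_Ico, Function.mem_support]
  constructor
  · rintro ⟨hki, hi⟩
    exact ⟨⟨hki, not_le.1 fun hMi => hi (hf.edgeSeq_eq_zero (hM.trans hMi))⟩, hi⟩
  · rintro ⟨⟨hki, -⟩, hi⟩
    exact ⟨hki, hi⟩

end IsPartition

lemma Delta_eq_sum_Ico {r : ℕ} {mu nu : ℕ → ℕ} (hm : IsPartition mu) (hn : IsPartition nu)
    {e : ℤ → ℚ} (he : (Function.support e).Finite)
    (hrel : ∀ i, (edgeSeq mu i : ℚ) = edgeSeq nu i + e i - e (i + r)) (k : ℤ) :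
    Delta r mu nu k = ∑ i ∈ Finset.Ico (k - r) k, ((edgeSeq nu i : ℚ) + e i) := by
  obtain ⟨B, hB⟩ := he.bddAbove
  set M := max (max (mu 0 : ℤ) (nu 0)) (max k (B + 1))
  have hkM : k ≤ M := by omega
  have htail : ∑ i ∈ Finset.Ico M (M + r), e i = 0 :=
    Finset.sum_eq_zero fun i hi => by
      by_contra hne
      have := hB hne
      simp only [Finset.mem_Ico] at hi
      omega
  have hshift : ∑ i ∈ Finset.Ico (k - r) M, e (i + r) = ∑ i ∈ Finset.Ico k M, e i := by
    rw [Finset.sum_Ico_add', sub_add_cancel, ← sum_Ico_add_sum_Ico e hkM (by omega), htail,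
      add_zero]
  rw [Delta, hm.Ecross_eq_sum_Ico (M := M) (by omega), hn.Ecross_eq_sum_Ico (M := M) (by omega)]
  simp only [hrel, Finset.sum_sub_distrib, hshift]
  rw [← sum_Ico_add_sum_Ico _ (by omega : k - r ≤ k) hkM,
    Finset.sum_add_distrib (s := Finset.Ico k M)]
  ring

section FourStrips

variable {r : ℕ} {l m n k : ℤ → ℕ}

lemma vRibbonInd_add_ribbonInd (hr : 1 ≤ r) (hl : IsBitSeq l) (hm : IsBitSeq m)
    (hn : IsBitSeq n) (hk : IsBitSeq k) (h1 : HStrip r l m) (h2 : VStrip r l n)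
    (h3 : VStrip r m k) (h4 : HStrip r n k) :
    vRibbonInd r m k + ribbonInd r l m = ribbonInd r n k + vRibbonInd r l n := by
  have hper : Function.Periodic
      (vRibbonInd r m k + ribbonInd r l m - (ribbonInd r n k + vRibbonInd r l n)) r := fun j => by
    simp only [Pi.add_apply, Pi.sub_apply]
    linarith [h1.add_ribbonInd_shift j, h2.add_vRibbonInd_shift hl hn j,
      h3.add_vRibbonInd_shift hm hk j, h4.add_ribbonInd_shift j]
  have hfin := (h3.finite_vRibbonAt.union h1.finite_ribbonAt).union
    (h4.finite_ribbonAt.union h2.finite_vRibbonAt)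
  refine sub_eq_zero.1 (hper.eq_zero_of_finite_support (by omega) (hfin.subset fun j hj => ?_))
  contrapose! hj
  simp_all [ribbonInd, vRibbonInd]

lemma add_ribbonInd_sub_vRibbonInd_eq_zero
    (hsum : vRibbonInd r m k + ribbonInd r l m = ribbonInd r n k + vRibbonInd r l n)
    {j : ℤ} (hA : VRibbonAt r m k j) (hB : RibbonAt r n k j) :
    (n j : ℚ) + (ribbonInd r l m j - vRibbonInd r l n j) = 0 := by
  have hj := congrFun hsum j
  simp only [Pi.add_apply, vRibbonInd_of_vRibbonAt hA, ribbonInd_apply r n k, if_pos hB] at hj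
  rw [hB.2.2.1, Nat.cast_zero]
  linarith

lemma add_ribbonInd_sub_vRibbonInd_sub_eq_zero (hl : IsBitSeq l) (hn : IsBitSeq n)
    (h1 : HStrip r l m) (h2 : VStrip r l n) {j : ℤ} (hC : RibbonAt r l m j)
    (hD : VRibbonAt r l n j) :
    (n (j - r) : ℚ) + (ribbonInd r l m (j - r) - vRibbonInd r l n (j - r)) = 0 := by
  have hc := h1.sub_add_ribbonInd_eq_one hC
  have hd := h2.add_vRibbonInd_shift hl hn (j - r)
  rw [VStrip.sub_eq_one hl hD, Nat.cast_one] at hc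
  rw [sub_add_cancel, vRibbonInd_of_vRibbonAt hD, VStrip.sub_eq_one hl hD, Nat.cast_one] at hd
  linarith

end FourStrips

lemma Delta_eq_sum_Ico_of_strips {r : ℕ} {lam mu nu : ℕ → ℕ} (hm : IsPartition mu)
    (hn : IsPartition nu) (h1 : HStrip r (edgeSeq lam) (edgeSeq mu))
    (h2 : VStrip r (edgeSeq lam) (edgeSeq nu)) (k : ℤ) :
    Delta r mu nu k = ∑ i ∈ Finset.Ico (k - r) k, ((edgeSeq nu i : ℚ) +
      (ribbonInd r (edgeSeq lam) (edgeSeq mu) i - vRibbonInd r (edgeSeq lam) (edgeSeq nu) i)) := by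
  refine Delta_eq_sum_Ico hm hn ((h1.finite_ribbonAt.union h2.finite_vRibbonAt).subset
    ((Function.support_sub _ _).trans (Set.union_subset_union (support_ribbonInd_subset ..)
      (support_vRibbonInd_subset ..)))) (fun i => ?_) k
  linarith [h1.add_ribbonInd_shift i,
    h2.add_vRibbonInd_shift (isBitSeq_edgeSeq lam) (isBitSeq_edgeSeq nu) i]

theorem stmt17_general (r : ℕ) (hr : 1 ≤ r) (lam mu nu kap : ℕ → ℕ)
    (hm : IsPartition mu) (hn : IsPartition nu)
    (h1 : HStrip r (edgeSeq lam) (edgeSeq mu))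
    (h2 : VStrip r (edgeSeq lam) (edgeSeq nu))
    (h3 : VStrip r (edgeSeq mu) (edgeSeq kap))
    (h4 : HStrip r (edgeSeq nu) (edgeSeq kap)) :
    ((twoSpinV r (edgeSeq mu) (edgeSeq kap) : ℚ)
        + (twoSpin r (edgeSeq nu) (edgeSeq kap) : ℚ)) / 2
      - ((twoSpin r (edgeSeq lam) (edgeSeq mu) : ℚ)
        + (twoSpinV r (edgeSeq lam) (edgeSeq nu) : ℚ)) / 2
    = (∑ᶠ k ∈ {k : ℤ | VRibbonAt r (edgeSeq mu) (edgeSeq kap) k ∧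
          RibbonAt r (edgeSeq nu) (edgeSeq kap) k}, Delta r mu nu (k + 1))
      - ∑ᶠ k ∈ {k : ℤ | RibbonAt r (edgeSeq lam) (edgeSeq mu) k ∧
          VRibbonAt r (edgeSeq lam) (edgeSeq nu) k}, Delta r mu nu k := by
  obtain ⟨U, hU⟩ := ((h3.finite_vRibbonAt.union h4.finite_ribbonAt).union
    (h1.finite_ribbonAt.union h2.finite_vRibbonAt)).exists_finset_coe
  obtain ⟨⟨hA, hB⟩, hC, hD⟩ := by simpa only [Set.union_subset_iff] using hU.superset
  have hsum := vRibbonInd_add_ribbonInd hr (isBitSeq_edgeSeq lam) (isBitSeq_edgeSeq mu)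
    (isBitSeq_edgeSeq nu) (isBitSeq_edgeSeq kap) h1 h2 h3 h4
  rw [h3.twoSpinV_eq (isBitSeq_edgeSeq mu) hA, h4.twoSpin_eq hB, h1.twoSpin_eq hC,
    h2.twoSpinV_eq (isBitSeq_edgeSeq lam) hD, finsum_mem_eq_windowPairing (fun j hj => hA hj.1) ?T,
    finsum_mem_eq_windowPairing (fun j hj => hC hj.1) ?S]
  · exact windowPairing_spin_identity ((support_vRibbonInd_subset ..).trans hA)
      ((support_ribbonInd_subset ..).trans hC) ((support_vRibbonInd_subset ..).trans hD) hsum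
      (indicator_inter_sub_indicator_inter hsum)
      (h2.add_vRibbonInd_shift (isBitSeq_edgeSeq lam) (isBitSeq_edgeSeq nu)) h1.add_ribbonInd_shift
  case T =>
    intro j hj
    rw [Delta_eq_sum_Ico_of_strips hm hn h1 h2]
    apply sum_Ico_add_one_eq_of_eq_zero hr
    exact add_ribbonInd_sub_vRibbonInd_eq_zero hsum hj.1 hj.2
  case S =>
    intro j hj
    rw [Delta_eq_sum_Ico_of_strips hm hn h1 h2]
    apply sum_Ico_sub_eq_of_eq_zero hr
    exact add_ribbonInd_sub_vRibbonInd_sub_eq_zero (isBitSeq_edgeSeq lam) (isBitSeq_edgeSeq nu)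
      h1 h2 hj.1 hj.2

/-- The spin difference lemma: with `μ/λ`, `κ/ν` horizontal and `ν/λ`, `κ/μ` vertical
`r`-ribbon strips, `S` the diagonals carrying heads of ribbons of both `μ/λ` and
`ν/λ`, and `T` those of both `κ/μ` and `κ/ν`, one has
`spinᵛ(κ/μ) + spin(κ/ν) - spin(μ/λ) - spinᵛ(ν/λ)
  = Σ_{k∈T} Δʳ(μ,ν)_{k+1} - Σ_{k∈S} Δʳ(μ,ν)_k`. -/
theorem stmt17 (r : ℕ) (hr : 1 ≤ r) (lam mu nu kap : ℕ → ℕ)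
    (hl : IsPartition lam) (hm : IsPartition mu) (hn : IsPartition nu)
    (hk : IsPartition kap)
    (h1 : HStrip r (edgeSeq lam) (edgeSeq mu))
    (h2 : VStrip r (edgeSeq lam) (edgeSeq nu))
    (h3 : VStrip r (edgeSeq mu) (edgeSeq kap))
    (h4 : HStrip r (edgeSeq nu) (edgeSeq kap)) :
    ((twoSpinV r (edgeSeq mu) (edgeSeq kap) : ℚ)
        + (twoSpin r (edgeSeq nu) (edgeSeq kap) : ℚ)) / 2
      - ((twoSpin r (edgeSeq lam) (edgeSeq mu) : ℚ)
        + (twoSpinV r (edgeSeq lam) (edgeSeq nu) : ℚ)) / 2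
    = (∑ᶠ k ∈ {k : ℤ | VRibbonAt r (edgeSeq mu) (edgeSeq kap) k ∧
          RibbonAt r (edgeSeq nu) (edgeSeq kap) k}, Delta r mu nu (k + 1))
      - ∑ᶠ k ∈ {k : ℤ | RibbonAt r (edgeSeq lam) (edgeSeq mu) k ∧
          VRibbonAt r (edgeSeq lam) (edgeSeq nu) k}, Delta r mu nu k :=
  stmt17_general r hr lam mu nu kap hm hn h1 h2 h3 h4
end

section
/- For partitions λ, μ, ν with μ/λ and ν/λ horizontal strips and a ∈ ℕ, define κ by κ₀ = a + max(μ₀, ν₀) and κ_{i+1} = min(μ_i, ν_i) + max(μ_{i+1}, ν_{i+1}) − λ_i for all i ≥ 0. Then κ is a partition with κ/μ and κ/ν horizontal strips if and only if a ≥ 0 and λ_i ≤ min(μ_i, ν_i) and max(μ_{i+1}, ν_{i+1}) ≤ λ_i for all i (i.e., μ/λ and ν/λ are horizontal strips); moreover this assignment (a, λ) ↦ κ is a bijection onto {κ : κ/μ and κ/ν are horizontal strips}, and |κ| − |μ| − |ν| + |λ| = a. -/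
open scoped Classical

/-- `μ/λ` is a horizontal strip: `λ ⊆ μ` and `μ_{i+1} ≤ λ_i` for all `i`. -/
def HS (f g : ℕ → ℕ) : Prop := ∀ i, f i ≤ g i ∧ g (i + 1) ≤ f i

/-- The shape `κ` of the RSK shape datum, defined by
`κ₀ = a + max (μ₀, ν₀)` and `κ_{i+1} = min (μ_i, ν_i) + max (μ_{i+1}, ν_{i+1}) − λ_i`
(computed in `ℤ`). -/
def kdef (mu nu lam : ℕ → ℕ) (a : ℕ) : ℕ → ℤ
  | 0 => (a : ℤ) + max (mu 0 : ℤ) (nu 0 : ℤ)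
  | (i + 1) => min (mu i : ℤ) (nu i : ℤ) + max (mu (i + 1) : ℤ) (nu (i + 1) : ℤ) - lam i

def kapN (mu nu lam : ℕ → ℕ) (a : ℕ) : ℕ → ℕ
  | 0 => a + max (mu 0) (nu 0)
  | (i + 1) => min (mu i) (nu i) + max (mu (i + 1)) (nu (i + 1)) - lam i

def lamN (mu nu kap : ℕ → ℕ) : ℕ → ℕ := fun i =>
  min (mu i) (nu i) + max (mu (i + 1)) (nu (i + 1)) - kap (i + 1)

lemma finsum_eq_range {f : ℕ → ℕ} {N : ℕ} (h : ∀ n, N ≤ n → f n = 0) :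
    ∑ᶠ i, f i = ∑ i ∈ Finset.range N, f i := by
  apply finsum_eq_sum_of_support_subset
  intro x hx
  simp only [Function.mem_support] at hx
  simp only [Finset.coe_range, Set.mem_Iio]
  by_contra hc
  exact hx (h x (by omega))

/-- The shape datum for the RSK correspondence: with `κ` defined by the above formulas,
`κ` is a partition with `κ/μ` and `κ/ν` horizontal strips iff `μ/λ` and `ν/λ` are
horizontal strips; the assignment `(a, λ) ↦ κ` is a bijection onto
`{κ : κ/μ and κ/ν horizontal strips}`, and `|κ| − |μ| − |ν| + |λ| = a`. -/
theorem stmt19 (mu nu : ℕ → ℕ) (hmu : IsPartition mu) (hnu : IsPartition nu) :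
    (∀ (a : ℕ) (lam : ℕ → ℕ), IsPartition lam →
      ((∃ kap : ℕ → ℕ, IsPartition kap ∧ HS mu kap ∧ HS nu kap ∧
          ∀ i, (kap i : ℤ) = kdef mu nu lam a i) ↔
        (HS lam mu ∧ HS lam nu))) ∧
    (∀ (a a' : ℕ) (lam lam' : ℕ → ℕ),
      IsPartition lam → HS lam mu → HS lam nu →
      IsPartition lam' → HS lam' mu → HS lam' nu →
      (∀ i, kdef mu nu lam a i = kdef mu nu lam' a' i) → a = a' ∧ lam = lam') ∧
    (∀ kap : ℕ → ℕ, IsPartition kap → HS mu kap → HS nu kap →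
      ∃ (a : ℕ) (lam : ℕ → ℕ), IsPartition lam ∧ HS lam mu ∧ HS lam nu ∧
        ∀ i, (kap i : ℤ) = kdef mu nu lam a i) ∧
    (∀ (a : ℕ) (lam kap : ℕ → ℕ), IsPartition lam → HS lam mu → HS lam nu →
      IsPartition kap → (∀ i, (kap i : ℤ) = kdef mu nu lam a i) →
      (∑ᶠ i : ℕ, kap i) + (∑ᶠ i : ℕ, lam i) = (∑ᶠ i : ℕ, mu i) + (∑ᶠ i : ℕ, nu i) + a) := by
  obtain ⟨hmum, Nmu, hNmu⟩ := hmu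
  obtain ⟨hnum, Nnu, hNnu⟩ := hnu
  refine ⟨?_, ?_, ?_, ?_⟩
  · -- Part 1
    intro a lam hlam
    constructor
    · rintro ⟨kap, ⟨hkm, _⟩, hmk, hnk, hkd⟩
      constructor <;> intro i <;>
      · have e := hkd (i + 1)
        simp only [kdef] at e
        have h1 := (hmk i).2
        have h2 := (hnk i).2
        have h3 := (hmk (i + 1)).1
        have h4 := (hnk (i + 1)).1
        omega
    · rintro ⟨h1, h2⟩
      obtain ⟨hlm, Nl, hNl⟩ := hlam
      refine ⟨kapN mu nu lam a, ⟨?_, ?_⟩, ?_, ?_, ?_⟩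
      · intro i j hij
        refine antitone_nat_of_succ_le (fun n => ?_) hij
        cases n with
        | zero =>
          have a1 := h1 0; have a2 := h2 0
          simp only [kapN]; omega
        | succ m =>
          have a1 := h1 m; have a2 := h2 m
          have a3 := h1 (m + 1); have a4 := h2 (m + 1)
          simp only [kapN]; omega
      · refine ⟨Nmu + Nnu + Nl + 1, fun n hn => ?_⟩
        cases n with
        | zero => omega
        | succ m =>
          have a1 := hNmu m (by omega); have a2 := hNnu m (by omega)
          have a3 := hNmu (m + 1) (by omega); have a4 := hNnu (m + 1) (by omega)
          simp only [kapN]; omega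
      · intro i
        cases i with
        | zero =>
          have a1 := h1 0; have a2 := h2 0
          have a3 := h1 1; have a4 := h2 1
          simp only [kapN]; omega
        | succ m =>
          have a1 := h1 m; have a2 := h2 m
          have a3 := h1 (m + 1); have a4 := h2 (m + 1)
          simp only [kapN]; omega
      · intro i
        cases i with
        | zero =>
          have a1 := h1 0; have a2 := h2 0
          have a3 := h1 1; have a4 := h2 1
          simp only [kapN]; omega
        | succ m =>
          have a1 := h1 m; have a2 := h2 m
          have a3 := h1 (m + 1); have a4 := h2 (m + 1)
          simp only [kapN]; omega
      · intro i
        cases i with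
        | zero => simp only [kapN, kdef]; push_cast; ring
        | succ m =>
          have a1 := h1 m; have a2 := h2 m
          simp only [kapN, kdef]; omega
  · -- Part 2
    intro a a' lam lam' _ _ _ _ _ _ h
    constructor
    · have := h 0
      simp only [kdef] at this; omega
    · funext i
      have := h (i + 1)
      simp only [kdef] at this; omega
  · -- Part 3
    rintro kap ⟨hkm, Nk, hNk⟩ hmk hnk
    refine ⟨kap 0 - max (mu 0) (nu 0), lamN mu nu kap, ⟨?_, ?_⟩, ?_, ?_, ?_⟩
    · intro i j hij
      refine antitone_nat_of_succ_le (fun n => ?_) hij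
      have a1 := (hmk n).2; have a2 := (hnk n).2
      have a3 := (hmk (n + 1)).1; have a4 := (hnk (n + 1)).1
      have a5 := (hmk (n + 1)).2; have a6 := (hnk (n + 1)).2
      have a7 := (hmk (n + 2)).1; have a8 := (hnk (n + 2)).1
      simp only [lamN, show n + 1 + 1 = n + 2 from rfl]; omega
    · refine ⟨Nmu + Nnu + Nk, fun n hn => ?_⟩
      have a1 := hNmu n (by omega); have a2 := hNnu n (by omega)
      have a3 := hNmu (n + 1) (by omega); have a4 := hNnu (n + 1) (by omega)
      simp only [lamN]; omega
    · intro i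
      have a1 := (hmk i).2; have a2 := (hnk i).2
      have a3 := (hmk (i + 1)).1; have a4 := (hnk (i + 1)).1
      simp only [lamN]; omega
    · intro i
      have a1 := (hmk i).2; have a2 := (hnk i).2
      have a3 := (hmk (i + 1)).1; have a4 := (hnk (i + 1)).1
      simp only [lamN]; omega
    · intro i
      cases i with
      | zero =>
        have a1 := (hmk 0).1; have a2 := (hnk 0).1
        simp only [kdef]; omega
      | succ m =>
        have a1 := (hmk m).2; have a2 := (hnk m).2
        have a3 := (hmk (m + 1)).1; have a4 := (hnk (m + 1)).1
        simp only [kdef, lamN]; omega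
  · -- Part 4
    intro a lam kap hlam hlm hln hkap hkd
    obtain ⟨hlmono, Nl, hNl⟩ := hlam
    obtain ⟨hkmono, Nk, hNk⟩ := hkap
    set N := Nmu + Nnu + Nl + Nk with hN
    have key : ∀ n, (∑ i ∈ Finset.range (n + 1), (kap i : ℤ)) +
        ∑ i ∈ Finset.range n, (lam i : ℤ) =
        (a : ℤ) + (∑ i ∈ Finset.range (n + 1), max (mu i : ℤ) (nu i : ℤ)) +
        ∑ i ∈ Finset.range n, min (mu i : ℤ) (nu i : ℤ) := by
      intro n
      induction n with
      | zero =>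
        have := hkd 0
        simp only [kdef] at this
        simp [this]
      | succ m ih =>
        rw [Finset.sum_range_succ (fun i => (kap i : ℤ)),
          Finset.sum_range_succ (fun i => (lam i : ℤ)),
          Finset.sum_range_succ (fun i => max (mu i : ℤ) (nu i : ℤ)),
          Finset.sum_range_succ (fun i => min (mu i : ℤ) (nu i : ℤ))]
        have e := hkd (m + 1)
        simp only [kdef] at e
        linarith [ih, e]
    have hk0 : ∀ n, N + 1 ≤ n → kap n = 0 := fun n hn => hNk n (by omega)
    have hl0 : ∀ n, N ≤ n → lam n = 0 := fun n hn => hNl n (by omega)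
    have hm0 : ∀ n, N + 1 ≤ n → mu n = 0 := fun n hn => hNmu n (by omega)
    have hn0 : ∀ n, N + 1 ≤ n → nu n = 0 := fun n hn => hNnu n (by omega)
    rw [finsum_eq_range hk0, finsum_eq_range hl0, finsum_eq_range hm0, finsum_eq_range hn0]
    have hKey := key N
    have hmin : ∑ i ∈ Finset.range (N + 1), min (mu i : ℤ) (nu i : ℤ) =
        ∑ i ∈ Finset.range N, min (mu i : ℤ) (nu i : ℤ) := by
      rw [Finset.sum_range_succ]
      have : mu N = 0 := hNmu N (by omega)
      simp [this]
    have hsum : (∑ i ∈ Finset.range (N + 1), max (mu i : ℤ) (nu i : ℤ)) +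
        ∑ i ∈ Finset.range (N + 1), min (mu i : ℤ) (nu i : ℤ) =
        (∑ i ∈ Finset.range (N + 1), (mu i : ℤ)) +
        ∑ i ∈ Finset.range (N + 1), (nu i : ℤ) := by
      rw [← Finset.sum_add_distrib, ← Finset.sum_add_distrib]
      exact Finset.sum_congr rfl fun i _ => by omega
    zify
    linarith [hKey, hmin, hsum]
end
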